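/- arXiv:0912.2023 — 7 statements merged into one kernel-verified Lean document; each statement's English description precedes it below -/
import Mathlib

section
/- For positive integers $i, j, N$ with $i \le j$, $\sum_{t=1}^{N} \frac{j-i}{t}\binom{t}{i}\binom{t}{j} = \sum_{l=0}^{i-1} \frac{j-i}{i}\binom{j-1}{i-l-1}\binom{l+j}{l}\binom{N+1}{l+j+1}$. -/
/-!
Absorption `C(t, i) / t = C(t - 1, i - 1) / i` turns the summand into `C(t - 1, i - 1) C(t, j)`
up to the factor `(j - i) / i`. Chu–Vandermonde expands `C(t - 1, i - 1)` along `t - 1 = (j - 1) + (t - j)`,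
and `C(t, j) C(t - j, l) = C(l + j, l) C(t, l + j)` rewrites each term as a multiple of `C(t, l + j)`.
Summing over `t` with the hockey-stick identity gives `C(N + 1, l + j + 1)`.
-/

open Finset

namespace Nat

theorem mul_choose_sub_one_sub_one {t i : ℕ} (ht : 1 ≤ t) (hi : 1 ≤ i) :
    t * (t - 1).choose (i - 1) = t.choose i * i := by
  obtain ⟨s, rfl⟩ := exists_add_of_le ht
  obtain ⟨k, rfl⟩ := exists_add_of_le hi
  simpa [add_comm] using add_one_mul_choose_eq s k

theorem choose_sub_one_eq_sum_range {j t : ℕ} (hj : 1 ≤ j) (hjt : j ≤ t) (k : ℕ) :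
    (t - 1).choose k = ∑ l ∈ range (k + 1), (j - 1).choose (k - l) * (t - j).choose l := by
  have hsplit : t - 1 = (t - j) + (j - 1) := by omega
  rw [hsplit, add_choose_eq, Finset.Nat.sum_antidiagonal_eq_sum_range_succ
    (fun a b => (t - j).choose a * (j - 1).choose b)]
  exact sum_congr rfl fun l _ => mul_comm _ _

theorem choose_sub_one_mul_choose_eq_sum {i j : ℕ} (hi : 1 ≤ i) (hj : 1 ≤ j) (t : ℕ) :
    (t - 1).choose (i - 1) * t.choose j =
      ∑ l ∈ range i, (j - 1).choose (i - l - 1) * ((l + j).choose l * t.choose (l + j)) := by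
  have hfactor : ∀ l, (l + j).choose l * t.choose (l + j) = t.choose j * (t - j).choose l := by
    intro l
    rw [choose_symm_add, mul_comm, choose_mul (le_add_left j l), Nat.add_sub_cancel]
  simp_rw [hfactor, mul_left_comm _ (t.choose j), ← mul_sum, mul_comm _ (t.choose j)]
  rcases lt_or_ge t j with htj | hjt
  · rw [choose_eq_zero_of_lt htj, zero_mul, zero_mul]
  · rw [choose_sub_one_eq_sum_range hj hjt, Nat.sub_add_cancel hi]
    simp only [Nat.sub_right_comm]

theorem sum_Icc_one_choose {k : ℕ} (hk : 1 ≤ k) (N : ℕ) :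
    ∑ t ∈ Icc 1 N, t.choose k = (N + 1).choose (k + 1) := by
  rw [← sum_Icc_choose]
  refine (sum_subset (Icc_subset_Icc_left hk) fun t ht htk => ?_).symm
  simp only [mem_Icc] at ht htk
  exact choose_eq_zero_of_lt (by omega)

end Nat

theorem stmt_4_general (i j N : ℕ) (hi : 1 ≤ i) (hij : i ≤ j) :
    ∑ t ∈ Finset.Icc 1 N,
        ((j : ℚ) - i) / t * Nat.choose t i * Nat.choose t j =
    ∑ l ∈ Finset.range i,
        ((j : ℚ) - i) / i * Nat.choose (j - 1) (i - l - 1) *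
          Nat.choose (l + j) l * Nat.choose (N + 1) (l + j + 1) := by
  have hj : 1 ≤ j := hi.trans hij
  calc _ = ∑ t ∈ Icc 1 N, ∑ l ∈ range i,
        ((j : ℚ) - i) / i * Nat.choose (j - 1) (i - l - 1) *
          Nat.choose (l + j) l * Nat.choose t (l + j) := by
        refine sum_congr rfl fun t ht => ?_
        have ht : 1 ≤ t := (mem_Icc.mp ht).1
        have habsorb : (t : ℚ) * (t - 1).choose (i - 1) = t.choose i * i := by
          exact_mod_cast Nat.mul_choose_sub_one_sub_one ht hi
        have hexpand : ((t - 1).choose (i - 1) * t.choose j : ℚ) = ∑ l ∈ range i,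
            ((j - 1).choose (i - l - 1) * ((l + j).choose l * t.choose (l + j)) : ℚ) := by
          exact_mod_cast Nat.choose_sub_one_mul_choose_eq_sum hi hj t
        calc ((j : ℚ) - i) / t * t.choose i * t.choose j
            = ((j : ℚ) - i) / i * ((t - 1).choose (i - 1) * t.choose j) := by
              field_simp
              linear_combination (-(((j : ℚ) - i) * t.choose j)) * habsorb
          _ = _ := by
              rw [hexpand, mul_sum]
              exact sum_congr rfl fun l _ => by ring
    _ = _ := by
        rw [sum_comm]
        refine sum_congr rfl fun l _ => ?_
        rw [← mul_sum, ← Nat.sum_Icc_one_choose (by omega : 1 ≤ l + j) N]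
        push_cast
        rfl

theorem stmt_4 (i j N : ℕ) (hi : 1 ≤ i) (hij : i ≤ j) (hN : 1 ≤ N) :
    ∑ t ∈ Finset.Icc 1 N,
        ((j : ℚ) - i) / t * Nat.choose t i * Nat.choose t j =
    ∑ l ∈ Finset.range i,
        ((j : ℚ) - i) / i * Nat.choose (j - 1) (i - l - 1) *
          Nat.choose (l + j) l * Nat.choose (N + 1) (l + j + 1) :=
  stmt_4_general i j N hi hij
end

section
/- For positive integers $n, s$ with $s \le n$, and positive integer $j$, $\sum_{i=1}^{2n-2s-1} \frac{(-1)^i}{2^{2n-2s-i-1}} \left( \sum_{t=1}^{2n-2s-1} \binom{t}{i}\binom{t-1}{j-1} - \sum_{t=1}^{2n-2s-1}\binom{t-1}{i-1}\binom{t}{j} \right) = 0$. -/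
/-!
Since `(-1)^i / 2^(m-i) = (-2)^i / 2^m`, after swapping the two summations the sums over `i`
are binomial expansions: `∑ᵢ (-2)^i C(t,i) = (-1)^t - 1` and
`∑ᵢ (-2)^i C(t-1,i-1) = -2 (-1)^(t-1)`. In the resulting sum over `t` the term `t = 1` vanishes
because `j ≥ 1`, and the terms `t = 2k, 2k+1` cancel by Pascal's rule, so the sum is zero whenever
the range `m = 2n - 2s - 1` is odd; by truncated subtraction it is otherwise `0`.
-/

open Finset

theorem sum_Icc_one_eq_sum_range {M : Type*} [AddCommMonoid M] (f : ℕ → M) (m : ℕ) :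
    ∑ i ∈ Icc 1 m, f i = ∑ i ∈ range m, f (i + 1) := by
  rw [range_eq_Ico, sum_Ico_add' f 0 m 1]
  rfl

theorem sum_range_pow_mul_choose {R : Type*} [CommSemiring R] (x : R) {t m : ℕ} (ht : t < m) :
    ∑ i ∈ range m, x ^ i * t.choose i = (x + 1) ^ t := by
  rw [add_pow]
  simp only [one_pow, mul_one]
  refine (sum_subset (range_subset_range.2 ht) fun i _ hi => ?_).symm
  rw [Nat.choose_eq_zero_of_lt (by simpa using hi), Nat.cast_zero, mul_zero]

theorem sum_Icc_pow_mul_choose {R : Type*} [CommRing R] (x : R) {t m : ℕ} (ht : t ≤ m) :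
    ∑ i ∈ Icc 1 m, x ^ i * t.choose i = (x + 1) ^ t - 1 := by
  rw [← sum_range_pow_mul_choose x (Nat.lt_succ_of_le ht), sum_range_succ',
    sum_Icc_one_eq_sum_range]
  simp

theorem sum_Icc_pow_mul_choose_pred {R : Type*} [CommSemiring R] (x : R) {t m : ℕ}
    (ht₀ : 1 ≤ t) (ht : t ≤ m) :
    ∑ i ∈ Icc 1 m, x ^ i * (t - 1).choose (i - 1) = x * (x + 1) ^ (t - 1) := by
  rw [sum_Icc_one_eq_sum_range, ← sum_range_pow_mul_choose x (by omega : t - 1 < m), mul_sum]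
  simp only [Nat.add_sub_cancel, pow_succ']
  exact sum_congr rfl fun i _ => mul_assoc _ _ _

theorem sum_Icc_alternating_pascal_of_odd (j : ℕ) {m : ℕ} (hm : Odd m) :
    ∑ t ∈ Icc 1 m,
      (((-1 : ℚ) ^ t - 1) * (t - 1).choose j + 2 * (-1) ^ (t - 1) * t.choose (j + 1)) = 0 := by
  obtain ⟨k, rfl⟩ := hm
  induction k with
  | zero => norm_num [Nat.choose_succ_succ]
  | succ k ih =>
    rw [show 2 * (k + 1) + 1 = 2 * k + 1 + 1 + 1 by ring, sum_Icc_succ_top (by omega),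
      sum_Icc_succ_top (by omega), ih]
    simp only [pow_succ, pow_mul, pow_zero, mul_neg, mul_one, neg_neg, one_pow, sub_self,
      add_tsub_cancel_right, zero_mul, neg_mul, zero_add, Nat.choose_succ_succ (2 * k + 1 + 1),
      Nat.cast_add]
    ring

theorem neg_one_pow_div_two_pow_sub {i m : ℕ} (hi : i ≤ m) :
    (-1 : ℚ) ^ i / 2 ^ (m - i) = (-2) ^ i / 2 ^ m := by
  rw [div_eq_div_iff (by positivity) (by positivity), ← Nat.sub_add_cancel hi, pow_add,
    Nat.add_sub_cancel, neg_pow (2 : ℚ)]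
  ring

theorem sum_Icc_alternating_choose_of_odd {m : ℕ} (hm : Odd m) {j : ℕ} (hj : 1 ≤ j) :
    ∑ i ∈ Icc 1 m, (-1 : ℚ) ^ i / 2 ^ (m - i) *
      ((∑ t ∈ Icc 1 m, (t.choose i * (t - 1).choose (j - 1) : ℚ)) -
        ∑ t ∈ Icc 1 m, ((t - 1).choose (i - 1) * t.choose j : ℚ)) = 0 := by
  obtain ⟨j, rfl⟩ : ∃ j', j = j' + 1 := ⟨j - 1, by omega⟩
  calc _ = ∑ i ∈ Icc 1 m, ∑ t ∈ Icc 1 m, (-2 : ℚ) ^ i / 2 ^ m *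
          (t.choose i * (t - 1).choose j - (t - 1).choose (i - 1) * t.choose (j + 1)) := by
        refine sum_congr rfl fun i hi => ?_
        rw [neg_one_pow_div_two_pow_sub (mem_Icc.1 hi).2, ← sum_sub_distrib, mul_sum,
          Nat.add_sub_cancel]
    _ = ∑ t ∈ Icc 1 m, 1 / 2 ^ m *
          ((∑ i ∈ Icc 1 m, (-2 : ℚ) ^ i * t.choose i) * (t - 1).choose j -
            (∑ i ∈ Icc 1 m, (-2 : ℚ) ^ i * (t - 1).choose (i - 1)) * t.choose (j + 1)) := by
        rw [sum_comm]
        refine sum_congr rfl fun t _ => ?_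
        rw [sum_mul, sum_mul, ← sum_sub_distrib, mul_sum]
        exact sum_congr rfl fun i _ => by ring
    _ = 1 / 2 ^ m * ∑ t ∈ Icc 1 m,
          (((-1 : ℚ) ^ t - 1) * (t - 1).choose j + 2 * (-1) ^ (t - 1) * t.choose (j + 1)) := by
        rw [mul_sum]
        refine sum_congr rfl fun t ht => ?_
        obtain ⟨ht₀, ht⟩ := mem_Icc.1 ht
        rw [sum_Icc_pow_mul_choose _ ht, sum_Icc_pow_mul_choose_pred _ ht₀ ht]
        norm_num
    _ = 0 := by rw [sum_Icc_alternating_pascal_of_odd j hm, mul_zero]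

theorem stmt_7_general (n s j : ℕ) (hj : 1 ≤ j) :
    ∑ i ∈ Finset.Icc 1 (2 * n - 2 * s - 1),
        ((-1 : ℚ)) ^ i / 2 ^ (2 * n - 2 * s - i - 1) *
          ((∑ t ∈ Finset.Icc 1 (2 * n - 2 * s - 1),
              (Nat.choose t i * Nat.choose (t - 1) (j - 1) : ℚ)) -
            ∑ t ∈ Finset.Icc 1 (2 * n - 2 * s - 1),
              (Nat.choose (t - 1) (i - 1) * Nat.choose t j : ℚ)) = 0 := by
  obtain h | h : 2 * n - 2 * s - 1 = 0 ∨ 2 * n - 2 * s - 1 = 2 * (n - s - 1) + 1 := by omega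
  · simp [h]
  · have hexp (i : ℕ) : 2 * n - 2 * s - i - 1 = 2 * (n - s - 1) + 1 - i := by omega
    simp only [hexp, h]
    exact sum_Icc_alternating_choose_of_odd (odd_two_mul_add_one _) hj

theorem stmt_7 (n s j : ℕ) (hs : 1 ≤ s) (hsn : s ≤ n) (hj : 1 ≤ j) :
    ∑ i ∈ Finset.Icc 1 (2 * n - 2 * s - 1),
        ((-1 : ℚ)) ^ i / 2 ^ (2 * n - 2 * s - i - 1) *
          ((∑ t ∈ Finset.Icc 1 (2 * n - 2 * s - 1),
              (Nat.choose t i * Nat.choose (t - 1) (j - 1) : ℚ)) -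
            ∑ t ∈ Finset.Icc 1 (2 * n - 2 * s - 1),
              (Nat.choose (t - 1) (i - 1) * Nat.choose t j : ℚ)) = 0 :=
  stmt_7_general n s j hj
end

section
/- (Gauss's second summation theorem, terminating case) For every nonnegative integer $N$ and real number $a$ such that no denominator vanishes: $\sum_{m=0}^{N} \frac{(a)_m (-N)_m}{m! \left(\frac{1}{2}+\frac{a}{2}-\frac{N}{2}\right)_m} \left(\frac{1}{2}\right)^m$ equals $0$ if $N$ is odd, and equals $\frac{(1/2)_{N/2}}{(1/2 - a/2)_{N/2}}$ if $N$ is even. -/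
/-!
Write `S N` for the sum and `c N = 1/2 + a/2 - N/2` for its lower parameter. A Zeilberger-type
certificate: with `t m` the `m`-th term of `S (N + 2)` and `s m` that of `S N`,
`(N + 2) ((N + 1 - a) t m - (N + 1) s m) = (a - N - 1) ((m + 1) t (m + 1) - m t m)`.
Summing over `m` telescopes to `(N + 1 - a) S (N + 2) = (N + 1) S N`, and the two-step recursion,
started from `S 0 = 1` and `S 1 = 0`, gives both parities.
-/

/-- The Pochhammer symbol `(a)_m = a (a+1) ⋯ (a+m-1)`. -/
noncomputable def poch (a : ℝ) (m : ℕ) : ℝ := ∏ i ∈ Finset.range m, (a + i)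

open Finset

section Pochhammer

lemma poch_succ (x : ℝ) (m : ℕ) : poch x (m + 1) = poch x m * (x + m) :=
  prod_range_succ _ _

lemma mul_poch_add_one (x : ℝ) (m : ℕ) : x * poch (x + 1) m = poch x m * (x + m) := by
  rw [← poch_succ, poch, poch, prod_range_succ']
  push_cast
  simp only [add_zero, add_assoc, add_comm (1 : ℝ), mul_comm x]

lemma mul_mul_poch_add_two (x : ℝ) (m : ℕ) :
    x * (x + 1) * poch (x + 2) m = poch x m * (x + m) * (x + m + 1) := by
  have h := mul_poch_add_one (x + 1) m
  rw [add_assoc, one_add_one_eq_two] at h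
  rw [mul_assoc, h, ← mul_assoc, mul_poch_add_one]
  ring

lemma poch_neg_natCast_eq_zero {n m : ℕ} (h : n < m) : poch (-(n : ℝ)) m = 0 :=
  prod_eq_zero (mem_range.mpr h) (by simp)

lemma poch_ne_zero_of_le {x : ℝ} {m n : ℕ} (hmn : m ≤ n) (h : poch x n ≠ 0) :
    poch x m ≠ 0 := by
  obtain ⟨k, rfl⟩ := Nat.exists_eq_add_of_le hmn
  induction k with
  | zero => exact h
  | succ k ih => exact ih (by omega) (left_ne_zero_of_mul (poch_succ x (m + k) ▸ h))

lemma add_ne_zero_of_poch_ne_zero {x : ℝ} {i n : ℕ} (hi : i < n) (h : poch x n ≠ 0) :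
    x + i ≠ 0 :=
  right_ne_zero_of_mul (poch_succ x i ▸ poch_ne_zero_of_le hi h)

lemma ne_zero_of_poch_ne_zero {x : ℝ} {n : ℕ} (hn : 0 < n) (h : poch x n ≠ 0) : x ≠ 0 := by
  simpa using add_ne_zero_of_poch_ne_zero hn h

end Pochhammer

section GaussSum

variable (a : ℝ)

noncomputable def gaussParam (N : ℕ) : ℝ := 1 / 2 + a / 2 - (N : ℝ) / 2

noncomputable def gaussTerm (N m : ℕ) : ℝ :=
  poch a m * poch (-(N : ℝ)) m / ((m.factorial : ℝ) * poch (gaussParam a N) m) * (1 / 2) ^ m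

noncomputable def gaussSeries (N : ℕ) : ℝ := ∑ m ∈ range (N + 1), gaussTerm a N m

variable {a}

lemma gaussParam_add_two (N : ℕ) : gaussParam a (N + 2) + 1 = gaussParam a N := by
  simp only [gaussParam]
  push_cast
  ring

lemma gaussTerm_eq_zero_of_lt {N m : ℕ} (h : N < m) : gaussTerm a N m = 0 := by
  simp [gaussTerm, poch_neg_natCast_eq_zero h]

lemma gaussSeries_eq_sum_range_of_le {N K : ℕ} (h : N ≤ K) :
    gaussSeries a N = ∑ m ∈ range (K + 1), gaussTerm a N m :=
  sum_subset (range_subset_range.mpr (by omega))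
    fun _ _ hm => gaussTerm_eq_zero_of_lt (by simp at hm; omega)

lemma mul_gaussTerm_succ {N m : ℕ} (h : poch (gaussParam a N) (m + 1) ≠ 0) :
    2 * (m + 1) * (gaussParam a N + m) * gaussTerm a N (m + 1) =
      (a + m) * (m - N) * gaussTerm a N m := by
  rw [poch_succ] at h
  have hpoch := left_ne_zero_of_mul h
  have hcm := right_ne_zero_of_mul h
  simp only [gaussTerm, poch_succ, Nat.factorial_succ]
  push_cast
  field_simp
  ring

lemma mul_gaussTerm_eq_mul_gaussTerm_add_two {N m : ℕ}
    (h : poch (gaussParam a (N + 2)) (m + 1) ≠ 0) :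
    (N + 2) * (N + 1) * (gaussParam a (N + 2) + m) * gaussTerm a N m =
      gaussParam a (N + 2) * (m - N - 2) * (m - N - 1) * gaussTerm a (N + 2) m := by
  set c := gaussParam a (N + 2)
  have hc : c ≠ 0 := ne_zero_of_poch_ne_zero m.succ_pos h
  have hcm : c + m ≠ 0 := add_ne_zero_of_poch_ne_zero (Nat.lt_succ_self m) h
  have hpoch : poch c m ≠ 0 := poch_ne_zero_of_le (Nat.le_succ m) h
  have hnum := mul_mul_poch_add_two (-((N : ℝ) + 2)) m
  have hE : poch (gaussParam a N) m = poch c m * (c + m) / c := by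
    rw [← gaussParam_add_two, ← mul_poch_add_one, mul_div_cancel_left₀ _ hc]
  rw [show -((N : ℝ) + 2) + 2 = -N by ring] at hnum
  simp only [gaussTerm, hE]
  push_cast
  field_simp
  rw [eq_div_iff (show poch (gaussParam a (N + 2)) m ≠ 0 from hpoch)]
  linear_combination (poch a m * poch c m) * hnum

lemma gaussTerm_certificate {N m : ℕ} (hm : m ≤ N + 2)
    (h : poch (gaussParam a (N + 2)) (N + 2) ≠ 0) :
    ((N : ℝ) + 2) * (((N : ℝ) + 1 - a) * gaussTerm a (N + 2) m - (N + 1) * gaussTerm a N m) =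
      (a - N - 1) * ((m + 1) * gaussTerm a (N + 2) (m + 1) - m * gaussTerm a (N + 2) m) := by
  rcases Nat.lt_or_ge m (N + 2) with hlt | hge
  · have hm1 := poch_ne_zero_of_le hlt h
    have hcm : gaussParam a (N + 2) + m ≠ 0 := add_ne_zero_of_poch_ne_zero hlt h
    have hsucc := mul_gaussTerm_succ hm1
    have hshift := mul_gaussTerm_eq_mul_gaussTerm_add_two hm1
    apply mul_left_cancel₀ hcm
    simp only [gaussParam] at hsucc hshift ⊢
    push_cast at hsucc hshift ⊢
    linear_combination (-1) * hshift - ((a - N - 1) / 2) * hsucc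
  · obtain rfl : m = N + 2 := le_antisymm hm hge
    rw [gaussTerm_eq_zero_of_lt (lt_add_one _), gaussTerm_eq_zero_of_lt (by omega : N < N + 2)]
    push_cast
    ring

lemma gaussSeries_add_two {N : ℕ} (h : poch (gaussParam a (N + 2)) (N + 2) ≠ 0) :
    gaussSeries a (N + 2) = (N + 1) / (N + 1 - a) * gaussSeries a N := by
  have hc : gaussParam a (N + 2) ≠ 0 := ne_zero_of_poch_ne_zero (N + 1).succ_pos h
  have ha : (N : ℝ) + 1 - a ≠ 0 := by
    contrapose! hc
    simp only [gaussParam]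
    push_cast
    linarith
  have hsum_sub := sum_range_sub (fun m : ℕ => (m : ℝ) * gaussTerm a (N + 2) m) (N + 3)
  push_cast at hsum_sub
  have htelescope :
      ((N : ℝ) + 2) * ((N + 1 - a) * gaussSeries a (N + 2) - (N + 1) * gaussSeries a N) = 0 := by
    rw [gaussSeries_eq_sum_range_of_le (N := N) (K := N + 2) (by omega), gaussSeries, mul_sum,
      mul_sum, ← sum_sub_distrib, mul_sum,
      sum_congr rfl fun m hm => gaussTerm_certificate (Nat.lt_succ_iff.mp (mem_range.mp hm)) h,
      ← mul_sum, hsum_sub, gaussTerm_eq_zero_of_lt (by omega : N + 2 < N + 3)]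
    simp
  have hrec := (mul_eq_zero.mp htelescope).resolve_left (by positivity)
  rw [div_mul_eq_mul_div, eq_div_iff ha]
  linear_combination hrec

lemma poch_gaussParam_ne_zero_of_add_two {N : ℕ} (h : poch (gaussParam a (N + 2)) (N + 2) ≠ 0) :
    poch (gaussParam a N) N ≠ 0 := by
  rw [poch_succ, ← mul_poch_add_one, gaussParam_add_two] at h
  exact poch_ne_zero_of_le (Nat.le_succ N) (right_ne_zero_of_mul h)

lemma gaussSeries_two_mul_add_one (L : ℕ)
    (h : poch (gaussParam a (2 * L + 1)) (2 * L + 1) ≠ 0) : gaussSeries a (2 * L + 1) = 0 := by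
  induction L with
  | zero =>
    have ha : a ≠ 0 := by simpa [poch, gaussParam] using h
    simp [gaussSeries, gaussTerm, gaussParam, poch, sum_range_succ]
    field_simp
    ring
  | succ L ih =>
    rw [show 2 * (L + 1) + 1 = 2 * L + 1 + 2 by ring] at h ⊢
    rw [gaussSeries_add_two h, ih (poch_gaussParam_ne_zero_of_add_two h), mul_zero]

lemma gaussSeries_two_mul (L : ℕ) (h : poch (gaussParam a (2 * L)) (2 * L) ≠ 0) :
    gaussSeries a (2 * L) = poch (1 / 2) L / poch (1 / 2 - a / 2) L := by
  induction L with
  | zero => simp [gaussSeries, gaussTerm, poch]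
  | succ L ih =>
    rw [show 2 * (L + 1) = 2 * L + 2 by ring] at h ⊢
    rw [gaussSeries_add_two h, ih (poch_gaussParam_ne_zero_of_add_two h), poch_succ, poch_succ,
      mul_comm, ← div_mul_div_comm]
    congr 1
    rw [← mul_div_mul_left (1 / 2 + (L : ℝ)) _ (two_ne_zero' ℝ)]
    push_cast
    ring_nf

end GaussSum

theorem stmt_9 (N : ℕ) (a : ℝ)
    (hden : ∀ m : ℕ, m ≤ N → poch (1 / 2 + a / 2 - (N : ℝ) / 2) m ≠ 0) :
    (Odd N →
      ∑ m ∈ Finset.range (N + 1),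
          poch a m * poch (-(N : ℝ)) m /
            ((m.factorial : ℝ) * poch (1 / 2 + a / 2 - (N : ℝ) / 2) m) *
            (1 / 2) ^ m = 0) ∧
    (Even N →
      ∑ m ∈ Finset.range (N + 1),
          poch a m * poch (-(N : ℝ)) m /
            ((m.factorial : ℝ) * poch (1 / 2 + a / 2 - (N : ℝ) / 2) m) *
            (1 / 2) ^ m =
        poch (1 / 2) (N / 2) / poch (1 / 2 - a / 2) (N / 2)) := by
  have h : poch (gaussParam a N) N ≠ 0 := hden N le_rfl
  refine ⟨fun ⟨L, hL⟩ => ?_, fun hN => ?_⟩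
  · subst hL
    exact gaussSeries_two_mul_add_one L h
  · obtain ⟨L, rfl⟩ := even_iff_exists_two_mul.mp hN
    rw [Nat.mul_div_cancel_left L two_pos]
    exact gaussSeries_two_mul L h
end

section
/- For all real numbers $b$ with $b+i > 0$ for $0 \le i \le 2n-2$, and positive integers $n$: $\det_{0\le i,j\le n-1}\big((j-i)\,\Gamma(b+i+j)\big)$ equals $0$ if $n$ is odd, and equals $\Big(\prod_{i=0}^{n-1} i!\,\Gamma(b+i)\Big)\frac{n!\,(b/2)_{n/2}}{(n/2)!}$ if $n$ is even. -/
open Finset Matrix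

namespace poch

lemma succ (a : ℝ) (m : ℕ) : poch a (m + 1) = poch a m * (a + m) :=
  prod_range_succ _ m

lemma succ' (a : ℝ) (m : ℕ) : poch a (m + 1) = a * poch (a + 1) m := by
  simp only [poch, prod_range_succ', Nat.cast_add, Nat.cast_one, Nat.cast_zero, add_zero]
  rw [mul_comm]
  exact congrArg (a * ·) (prod_congr rfl fun k _ => by ring)

lemma add_one_sub (a : ℝ) (m : ℕ) : poch (a + 1) m - poch a m = m * poch (a + 1) (m - 1) := by
  cases m with
  | zero => simp [poch]
  | succ m => rw [succ, succ', Nat.add_sub_cancel]; push_cast; ring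

end poch

lemma Gamma_add_nat_eq_poch_mul {a : ℝ} (ha : 0 < a) (m : ℕ) :
    Real.Gamma (a + m) = poch a m * Real.Gamma a := by
  induction m with
  | zero => simp [poch]
  | succ m ih =>
    rw [Nat.cast_succ, ← add_assoc, Real.Gamma_add_one (by positivity), ih, poch.succ]
    ring

lemma Gamma_add_nat_eq_poch_mul_of_le {b : ℝ} (hb : 0 < b) {k i : ℕ} (hki : k ≤ i) :
    Real.Gamma (b + i) = poch (b + k) (i - k) * Real.Gamma (b + k) := by
  rw [← Gamma_add_nat_eq_poch_mul (by positivity), add_assoc, ← Nat.cast_add,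
    Nat.add_sub_cancel' hki]

lemma fwdDiff_iter_poch (a : ℝ) (l i : ℕ) :
    (fwdDiff 1)^[i] (fun x : ℝ => poch (a + x) l) =
      fun x => l.descFactorial i * poch (a + i + x) (l - i) := by
  induction i with
  | zero => simp
  | succ i ih =>
    ext x
    rw [Function.iterate_succ_apply', ih]
    simp only [fwdDiff]
    rw [← mul_sub, show a + i + (x + 1) = a + i + x + 1 by ring, poch.add_one_sub,
      Nat.descFactorial_succ, Nat.sub_sub]
    push_cast
    ring_nf

lemma sum_alternating_choose_mul_descFactorial (j m : ℕ) :
    ∑ l ∈ range (j + 1), (-1 : ℤ) ^ (j - l) * j.choose l * l.descFactorial m =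
      if j = m then (j.factorial : ℤ) else 0 := by
  have h := fwdDiff_iter_choose_zero m j
  rw [fwdDiff_iter_eq_sum_shift] at h
  simp only [zero_add, smul_eq_mul, mul_one] at h
  simp only [Nat.descFactorial_eq_factorial_mul_choose, Nat.cast_mul]
  calc _ = (m.factorial : ℤ) *
        ∑ l ∈ range (j + 1), (-1 : ℤ) ^ (j - l) * j.choose l * l.choose m := by
        rw [mul_sum]; exact sum_congr rfl fun l _ => by ring
    _ = _ := by rw [h]; split_ifs with hjm <;> simp [hjm]

lemma Nat.mul_descFactorial (l i : ℕ) :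
    l * l.descFactorial i = l.descFactorial (i + 1) + i * l.descFactorial i := by
  rw [Nat.descFactorial_succ]
  rcases le_or_gt i l with hil | hli
  · rw [← add_mul, Nat.sub_add_cancel hil]
  · simp [Nat.descFactorial_eq_zero_iff_lt.2 hli]

lemma sum_alternating_choose_mul_mul_descFactorial (j i : ℕ) :
    ∑ l ∈ range (j + 1), (-1 : ℤ) ^ (j - l) * j.choose l * (l * l.descFactorial i) =
      (if j = i + 1 then (j.factorial : ℤ) else 0) +
        i * if j = i then (j.factorial : ℤ) else 0 := by
  simp_rw [← sum_alternating_choose_mul_descFactorial, mul_sum, ← sum_add_distrib]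
  refine sum_congr rfl fun l _ => ?_
  rw [← Nat.cast_mul, Nat.mul_descFactorial]
  push_cast
  ring

/-- `laguerreCoeff b i k` is the coefficient of `xᵏ` in the `i`-th monic orthogonal polynomial for
the weight `x ^ (b - 1) * exp (-x)` on `(0, ∞)`, whose moments are `Γ (b + s)`. -/
noncomputable def laguerreCoeff (b : ℝ) (i k : ℕ) : ℝ :=
  (-1) ^ (i - k) * i.choose k * poch (b + k) (i - k)

section laguerre

variable {b : ℝ}

lemma laguerreCoeff_self (i : ℕ) : laguerreCoeff b i i = 1 := by
  simp [laguerreCoeff, poch]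

lemma sum_fin_laguerreCoeff_mul (f : ℕ → ℝ) {i n : ℕ} (hi : i < n) :
    ∑ k : Fin n, laguerreCoeff b i k * f k =
      ∑ k ∈ range (i + 1), laguerreCoeff b i k * f k := by
  rw [Fin.sum_univ_eq_sum_range (fun k => laguerreCoeff b i k * f k)]
  refine (sum_subset (range_subset_range.2 hi) fun k _ hk => ?_).symm
  simp [laguerreCoeff, Nat.choose_eq_zero_of_lt (by simpa using hk : i < k)]

lemma laguerreCoeff_mul_Gamma (hb : 0 < b) (i k : ℕ) :
    laguerreCoeff b i k * Real.Gamma (b + k) =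
      (-1) ^ (i - k) * i.choose k * Real.Gamma (b + i) := by
  rcases le_or_gt k i with hki | hik
  · rw [laguerreCoeff, mul_assoc, ← Gamma_add_nat_eq_poch_mul_of_le hb hki]
  · simp [laguerreCoeff, Nat.choose_eq_zero_of_lt hik]

lemma sum_laguerreCoeff_mul_Gamma (hb : 0 < b) (i l : ℕ) :
    ∑ k ∈ range (i + 1), laguerreCoeff b i k * Real.Gamma (b + k + l) =
      l.descFactorial i * Real.Gamma (b + l) := by
  have hshift := fwdDiff_iter_eq_sum_shift 1 (fun x : ℝ => poch (b + x) l) i 0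
  rw [fwdDiff_iter_poch] at hshift
  simp only [zero_add, add_zero, nsmul_eq_mul, mul_one, zsmul_eq_mul] at hshift
  calc _ = Real.Gamma (b + i) * ∑ k ∈ range (i + 1),
          ((-1) ^ (i - k) * i.choose k : ℤ) * poch (b + k) l := by
        rw [mul_sum]
        refine sum_congr rfl fun k _ => ?_
        rw [Gamma_add_nat_eq_poch_mul (by positivity), mul_left_comm, laguerreCoeff_mul_Gamma hb]
        push_cast
        ring
    _ = l.descFactorial i * (poch (b + i) (l - i) * Real.Gamma (b + i)) := by
        rw [← hshift]; ring
    _ = _ := by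
        rcases le_or_gt i l with hil | hli
        · rw [Gamma_add_nat_eq_poch_mul_of_le hb hil]
        · simp [Nat.descFactorial_eq_zero_iff_lt.2 hli]

lemma sum_laguerreCoeff_mul_descFactorial (hb : 0 < b) (i j : ℕ) :
    ∑ l ∈ range (j + 1), laguerreCoeff b j l * (l * l.descFactorial i * Real.Gamma (b + l)) =
      ((if j = i + 1 then (j.factorial : ℝ) else 0) +
        i * if j = i then (j.factorial : ℝ) else 0) * Real.Gamma (b + j) := by
  have h := congrArg (Int.cast : ℤ → ℝ) (sum_alternating_choose_mul_mul_descFactorial j i)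
  push_cast at h
  rw [← h, sum_mul]
  refine sum_congr rfl fun l _ => ?_
  rw [mul_left_comm, laguerreCoeff_mul_Gamma hb]
  ring

end laguerre

lemma Matrix.det_eq_of_row_zero_of_col_zero {R : Type*} [CommRing R] {n : ℕ}
    (M : Matrix (Fin (n + 2)) (Fin (n + 2)) R) (hrow : ∀ j, j ≠ 1 → M 0 j = 0)
    (hcol : ∀ i, i ≠ 1 → M i 0 = 0) :
    M.det = -(M 0 1 * M 1 0) *
      (M.submatrix (fun i : Fin n => i.succ.succ) (fun j : Fin n => j.succ.succ)).det := by
  rw [det_succ_row_zero, Fintype.sum_eq_single 1 fun j hj => by simp [hrow j hj],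
    det_succ_column_zero, Fintype.sum_eq_single 0 fun i hi => ?_]
  · simp [submatrix_submatrix, Function.comp_def, Fin.one_succAbove_succ, mul_assoc]
  · have hi1 : i.succ ≠ 1 := fun h =>
      hi (Fin.succ_injective _ (h.trans Fin.succ_zero_eq_one.symm))
    simp only [submatrix_apply, Fin.one_succAbove_zero, hcol _ hi1, mul_zero, zero_mul]

section skewTridiag

variable {R : Type*} [CommRing R]

def skewTridiag (c : ℕ → R) (n : ℕ) : Matrix (Fin n) (Fin n) R :=
  of fun i j => if (j : ℕ) = i + 1 then c i else if (i : ℕ) = j + 1 then -c j else 0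

lemma det_skewTridiag_add_two (c : ℕ → R) (n : ℕ) :
    (skewTridiag c (n + 2)).det = c 0 ^ 2 * (skewTridiag (fun k => c (k + 2)) n).det := by
  rw [det_eq_of_row_zero_of_col_zero]
  · congr 1
    · simp [skewTridiag, sq]
    · congr 1; ext i j; simp [skewTridiag]
  all_goals
    intro k hk
    have hk1 : (k : ℕ) ≠ 1 := fun h => hk (Fin.ext (by rw [h, Fin.val_one]))
    simp [skewTridiag, hk1]

lemma det_skewTridiag_two_mul (c : ℕ → R) (m : ℕ) :
    (skewTridiag c (2 * m)).det = ∏ k ∈ range m, c (2 * k) ^ 2 := by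
  induction m generalizing c with
  | zero => simp
  | succ m ih =>
    rw [mul_add_one, det_skewTridiag_add_two, ih, prod_range_succ']
    simp only [mul_add_one, mul_zero]
    ring

lemma det_skewTridiag_two_mul_add_one (c : ℕ → R) (m : ℕ) :
    (skewTridiag c (2 * m + 1)).det = 0 := by
  induction m generalizing c with
  | zero => simp [skewTridiag]
  | succ m ih =>
    rw [show 2 * (m + 1) + 1 = 2 * m + 1 + 2 by ring, det_skewTridiag_add_two, ih, mul_zero]

end skewTridiag

lemma Matrix.mul_commutator_mul_transpose {ι R : Type*} [Fintype ι] [CommRing R]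
    {P H D : Matrix ι ι R} (hH : Hᵀ = H) (hD : Dᵀ = D) :
    P * (H * D - D * H) * Pᵀ = P * H * D * Pᵀ - (P * H * D * Pᵀ)ᵀ := by
  simp only [transpose_mul, transpose_transpose, hH, hD, mul_sub, sub_mul, Matrix.mul_assoc]

section matrices

variable (b : ℝ) (n : ℕ)

noncomputable def laguerreMatrix : Matrix (Fin n) (Fin n) ℝ :=
  of fun i k => laguerreCoeff b i k

noncomputable def gammaHankel : Matrix (Fin n) (Fin n) ℝ :=
  of fun i j => Real.Gamma (b + i + j)

lemma det_laguerreMatrix : (laguerreMatrix b n).det = 1 := by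
  rw [det_of_isLowerTriangular _ fun i k (hik : i < k) => ?_]
  · simp [laguerreMatrix, laguerreCoeff_self]
  · simp [laguerreMatrix, laguerreCoeff, Nat.choose_eq_zero_of_lt (show (i : ℕ) < k from hik)]

lemma gammaSkew_eq_commutator :
    (of fun i j : Fin n => ((j : ℝ) - (i : ℝ)) * Real.Gamma (b + (i : ℝ) + (j : ℝ))) =
      gammaHankel b n * diagonal (fun l : Fin n => (l : ℝ)) -
        diagonal (fun l : Fin n => (l : ℝ)) * gammaHankel b n := by
  ext i j
  simp [gammaHankel, sub_mul, mul_comm]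

variable {b n}

lemma laguerreMatrix_mul_gammaHankel_apply (hb : 0 < b) (i l : Fin n) :
    (laguerreMatrix b n * gammaHankel b n) i l =
      (l : ℕ).descFactorial i * Real.Gamma (b + l) := by
  simp only [mul_apply, laguerreMatrix, gammaHankel, of_apply]
  rw [sum_fin_laguerreCoeff_mul (fun k => Real.Gamma (b + k + l)) i.isLt,
    sum_laguerreCoeff_mul_Gamma hb]

lemma laguerreMatrix_conj_apply (hb : 0 < b) (i j : Fin n) :
    (laguerreMatrix b n * gammaHankel b n * diagonal (fun l : Fin n => (l : ℝ)) *
        (laguerreMatrix b n)ᵀ) i j =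
      ((if (j : ℕ) = i + 1 then ((j : ℕ).factorial : ℝ) else 0) +
        i * if (j : ℕ) = i then ((j : ℕ).factorial : ℝ) else 0) * Real.Gamma (b + j) := by
  rw [mul_apply]
  simp only [mul_diagonal, transpose_apply, laguerreMatrix_mul_gammaHankel_apply hb]
  rw [← sum_laguerreCoeff_mul_descFactorial hb, ← sum_fin_laguerreCoeff_mul _ j.isLt]
  refine sum_congr rfl fun l _ => ?_
  simp only [laguerreMatrix, of_apply]
  ring

lemma laguerreMatrix_conj_gammaSkew (hb : 0 < b) :
    laguerreMatrix b n *
        (of fun i j : Fin n => ((j : ℝ) - (i : ℝ)) * Real.Gamma (b + (i : ℝ) + (j : ℝ))) *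
        (laguerreMatrix b n)ᵀ =
      skewTridiag (fun k => ((k + 1).factorial : ℝ) * Real.Gamma (b + (k + 1 : ℕ))) n := by
  have hH : (gammaHankel b n)ᵀ = gammaHankel b n := by ext; simp [gammaHankel, add_right_comm]
  rw [gammaSkew_eq_commutator, mul_commutator_mul_transpose hH (diagonal_transpose _)]
  ext ⟨i, hi⟩ ⟨j, hj⟩
  simp only [Matrix.sub_apply, transpose_apply, laguerreMatrix_conj_apply hb, skewTridiag, of_apply]
  split_ifs <;> subst_vars <;> first | omega | ring

end matrices

lemma det_gammaSkew_eq_det_skewTridiag {b : ℝ} (hb : 0 < b) (n : ℕ) :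
    (of fun i j : Fin n => ((j : ℝ) - (i : ℝ)) * Real.Gamma (b + (i : ℝ) + (j : ℝ))).det =
      (skewTridiag
        (fun k => ((k + 1).factorial : ℝ) * Real.Gamma (b + (k + 1 : ℕ))) n).det := by
  have h := congrArg det (laguerreMatrix_conj_gammaSkew (n := n) hb)
  rwa [det_mul, det_mul, det_transpose, det_laguerreMatrix, one_mul, mul_one] at h

lemma Finset.prod_range_two_mul {M : Type*} [CommMonoid M] (f : ℕ → M) (m : ℕ) :
    ∏ i ∈ range (2 * m), f i = ∏ k ∈ range m, f (2 * k) * f (2 * k + 1) := by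
  induction m with
  | zero => simp
  | succ m ih => rw [mul_add_one, prod_range_succ, prod_range_succ, prod_range_succ, ih, mul_assoc]

lemma prod_range_odd_mul_factorial (b : ℝ) (m : ℕ) :
    (∏ k ∈ range m, ((2 * k + 1 : ℝ) * (b + 2 * k))) * m.factorial =
      (2 * m).factorial * poch (b / 2) m := by
  induction m with
  | zero => simp [poch]
  | succ m ih =>
    rw [prod_range_succ, Nat.factorial_succ, mul_add_one, Nat.factorial_succ, Nat.factorial_succ,
      poch.succ]
    push_cast
    linear_combination ((2 * m + 1 : ℝ) * (b + 2 * m) * (m + 1)) * ih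

lemma sq_factorial_mul_Gamma_odd {b : ℝ} (hb : 0 < b) (k : ℕ) :
    (((2 * k + 1).factorial : ℝ) * Real.Gamma (b + (2 * k + 1 : ℕ))) ^ 2 =
      (((2 * k).factorial : ℝ) * Real.Gamma (b + (2 * k : ℕ))) *
        (((2 * k + 1).factorial : ℝ) * Real.Gamma (b + (2 * k + 1 : ℕ))) *
          ((2 * k + 1 : ℝ) * (b + 2 * k)) := by
  rw [Nat.cast_succ, ← add_assoc, Real.Gamma_add_one (by positivity), Nat.factorial_succ]
  push_cast
  ring

theorem stmt_11_general (b : ℝ) (n : ℕ)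
    (hb : ∀ i : ℕ, i ≤ 2 * n - 2 → 0 < b + i) :
    (Odd n →
      Matrix.det (Matrix.of fun i j : Fin n =>
          ((j : ℝ) - (i : ℝ)) * Real.Gamma (b + (i : ℝ) + (j : ℝ))) = 0) ∧
    (Even n →
      Matrix.det (Matrix.of fun i j : Fin n =>
          ((j : ℝ) - (i : ℝ)) * Real.Gamma (b + (i : ℝ) + (j : ℝ))) =
        (∏ i ∈ Finset.range n, (i.factorial : ℝ) * Real.Gamma (b + i)) *
          ((n.factorial : ℝ) * poch (b / 2) (n / 2) / ((n / 2).factorial : ℝ))) := by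
  have hb0 : 0 < b := by simpa using hb 0 (Nat.zero_le _)
  rw [det_gammaSkew_eq_det_skewTridiag hb0]
  refine ⟨fun ⟨m, hm⟩ => by rw [hm, det_skewTridiag_two_mul_add_one], fun ⟨m, hm⟩ => ?_⟩
  rw [← two_mul] at hm
  subst hm
  rw [det_skewTridiag_two_mul, Nat.mul_div_cancel_left m two_pos, ← prod_range_odd_mul_factorial,
    mul_div_cancel_right₀ _ (by positivity), prod_range_two_mul, ← prod_mul_distrib]
  exact prod_congr rfl fun k _ => sq_factorial_mul_Gamma_odd hb0 k

theorem stmt_11 (b : ℝ) (n : ℕ) (hn : 0 < n)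
    (hb : ∀ i : ℕ, i ≤ 2 * n - 2 → 0 < b + i) :
    (Odd n →
      Matrix.det (Matrix.of fun i j : Fin n =>
          ((j : ℝ) - (i : ℝ)) * Real.Gamma (b + (i : ℝ) + (j : ℝ))) = 0) ∧
    (Even n →
      Matrix.det (Matrix.of fun i j : Fin n =>
          ((j : ℝ) - (i : ℝ)) * Real.Gamma (b + (i : ℝ) + (j : ℝ))) =
        (∏ i ∈ Finset.range n, (i.factorial : ℝ) * Real.Gamma (b + i)) *
          ((n.factorial : ℝ) * poch (b / 2) (n / 2) / ((n / 2).factorial : ℝ))) :=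
  stmt_11_general b n hb
end

section
/- Let $k$ be a fixed nonnegative integer and let $\beta$ be a nonzero real number. Then $\int_0^1 \frac{(1-\alpha)^{4k+2}}{(1+\alpha/\beta)\sqrt{\alpha(2-\alpha)}}\,d\alpha$ is asymptotic to $\sqrt{\pi/(8k)}$ as $k \to \infty$; that is, the ratio of the integral to $\sqrt{\pi/(8k)}$ tends to $1$. (Assume $\beta > 0$ or $\beta < -1$ so that the integrand has no singularity on $[0,1]$.) -/
/-!
Substituting `α = 1 - cos θ` turns the integral into `∫₀^{π/2} cos θ ^ (4k+2) * g θ` with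
`g θ = (1 + (1 - cos θ) / β)⁻¹` continuous on `[0, π/2]` and `g 0 = 1`. As `cos θ ^ n` concentrates
at `θ = 0`, this is asymptotic to the Wallis integral `I n = ∫₀^{π/2} cos θ ^ n`, and
`I n ~ √(π / (2n))` because `(n + 1) * I (n + 1) * I n = π / 2` while `I` is decreasing.
-/

open Real Filter Set Asymptotics intervalIntegral
open scoped Topology

lemma integral_cos_pow_add_two (n : ℕ) :
    ∫ x in 0..π / 2, cos x ^ (n + 2) = (n + 1) / (n + 2) * ∫ x in 0..π / 2, cos x ^ n := by
  simp [integral_cos_pow]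

lemma succ_mul_integral_cos_pow_succ_mul (n : ℕ) :
    (n + 1) * (∫ x in 0..π / 2, cos x ^ (n + 1)) * ∫ x in 0..π / 2, cos x ^ n = π / 2 := by
  induction n with
  | zero => simp
  | succ n ih =>
    convert ih using 1
    rw [integral_cos_pow_add_two]
    push_cast
    field_simp
    ring

lemma integral_cos_pow_nonneg (n : ℕ) : 0 ≤ ∫ x in 0..π / 2, cos x ^ n :=
  integral_nonneg (by positivity) fun x hx =>
    pow_nonneg (cos_nonneg_of_mem_Icc ⟨by linarith [hx.1, pi_pos], hx.2⟩) n

lemma integral_cos_pow_succ_le (n : ℕ) :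
    ∫ x in 0..π / 2, cos x ^ (n + 1) ≤ ∫ x in 0..π / 2, cos x ^ n :=
  integral_mono_on (by positivity) ((continuous_cos.pow _).intervalIntegrable _ _)
    ((continuous_cos.pow _).intervalIntegrable _ _) fun x hx =>
    pow_le_pow_of_le_one (cos_nonneg_of_mem_Icc ⟨by linarith [hx.1, pi_pos], hx.2⟩)
      (cos_le_one x) n.le_succ

lemma pi_div_two_le_succ_mul_integral_cos_pow_sq (n : ℕ) :
    π / 2 ≤ (n + 1) * (∫ x in 0..π / 2, cos x ^ n) ^ 2 := by
  calc π / 2 = (n + 1) * (∫ x in 0..π / 2, cos x ^ (n + 1)) * ∫ x in 0..π / 2, cos x ^ n :=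
        (succ_mul_integral_cos_pow_succ_mul n).symm
    _ ≤ (n + 1) * (∫ x in 0..π / 2, cos x ^ n) * ∫ x in 0..π / 2, cos x ^ n := by
        gcongr
        · exact integral_cos_pow_nonneg n
        · exact integral_cos_pow_succ_le n
    _ = _ := by ring

lemma succ_mul_integral_cos_pow_succ_sq_le (n : ℕ) :
    (n + 1) * (∫ x in 0..π / 2, cos x ^ (n + 1)) ^ 2 ≤ π / 2 := by
  calc _ = (n + 1) * (∫ x in 0..π / 2, cos x ^ (n + 1)) * ∫ x in 0..π / 2, cos x ^ (n + 1) := by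
        ring
    _ ≤ (n + 1) * (∫ x in 0..π / 2, cos x ^ (n + 1)) * ∫ x in 0..π / 2, cos x ^ n := by
        gcongr
        · exact mul_nonneg (by positivity) (integral_cos_pow_nonneg _)
        · exact integral_cos_pow_succ_le n
    _ = π / 2 := succ_mul_integral_cos_pow_succ_mul n

theorem integral_cos_pow_isEquivalent :
    (fun n : ℕ => ∫ x in 0..π / 2, cos x ^ n) ~[atTop] fun n => √(π / (2 * n)) := by
  set I : ℕ → ℝ := fun n => ∫ x in 0..π / 2, cos x ^ n
  have lower (n : ℕ) : (n : ℝ) / (n + 1) ≤ 2 * n / π * I n ^ 2 :=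
    calc (n : ℝ) / (n + 1) = 2 * n / π * (π / 2) / (n + 1) := by field_simp
      _ ≤ 2 * n / π * ((n + 1) * I n ^ 2) / (n + 1) := by
        gcongr; exact pi_div_two_le_succ_mul_integral_cos_pow_sq n
      _ = 2 * n / π * I n ^ 2 := by field_simp
  have upper (n : ℕ) : 2 * n / π * I n ^ 2 ≤ 1 := by
    cases n with
    | zero => simp
    | succ n =>
      rw [div_mul_eq_mul_div, div_le_one pi_pos]
      push_cast
      linarith [succ_mul_integral_cos_pow_succ_sq_le n]
  have hsq : Tendsto (fun n : ℕ => 2 * n / π * I n ^ 2) atTop (𝓝 1) :=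
    tendsto_of_tendsto_of_tendsto_of_le_of_le (tendsto_natCast_div_add_atTop 1)
      tendsto_const_nhds lower upper
  refine isEquivalent_of_tendsto_one ?_
  convert hsq.sqrt using 1
  · ext n
    change I n / √(π / (2 * n)) = √(2 * n / π * I n ^ 2)
    rw [sqrt_mul' _ (sq_nonneg _), sqrt_sq (integral_cos_pow_nonneg n), ← inv_div (2 * n : ℝ) π,
      sqrt_inv, div_inv_eq_mul, mul_comm]
  · simp

lemma integral_cos_pow_add_two_isEquivalent :
    (fun n : ℕ => ∫ x in 0..π / 2, cos x ^ (n + 2)) ~[atTop]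
      fun n => ∫ x in 0..π / 2, cos x ^ n := by
  refine isEquivalent_of_tendsto_one ?_
  have hne (n : ℕ) : ∫ x in 0..π / 2, cos x ^ n ≠ 0 := fun h =>
    pi_div_two_pos.ne' (by simpa [h] using (succ_mul_integral_cos_pow_succ_mul n).symm)
  have hlim : Tendsto (fun n : ℕ => ((n : ℝ) + 1) / (n + 2)) atTop (𝓝 1) := by
    refine ((tendsto_natCast_div_add_atTop (1 : ℝ)).comp (tendsto_add_atTop_nat 1)).congr
      fun n => ?_
    simp only [Function.comp_apply]
    push_cast
    ring
  refine hlim.congr fun n => ?_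
  rw [Pi.div_apply, integral_cos_pow_add_two, mul_div_assoc, div_self (hne n), mul_one]

theorem tendsto_integral_cos_pow_mul_div_real {g : ℝ → ℝ} (hg : ContinuousOn g (Icc 0 (π / 2))) :
    Tendsto (fun n : ℕ => (∫ x in 0..π / 2, cos x ^ n * g x) / ∫ x in 0..π / 2, cos x ^ n)
      atTop (𝓝 (g 0)) := by
  have := (Complex.continuous_re.tendsto _).comp
    (EulerSine.tendsto_integral_cos_pow_mul_div (f := fun x => (g x : ℂ)) (by fun_prop))
  refine this.congr fun n => ?_
  have hcast : ∫ x in 0..π / 2, (cos x : ℂ) ^ n * g x =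
      ((∫ x in 0..π / 2, cos x ^ n * g x : ℝ) : ℂ) := by
    push_cast [← intervalIntegral.integral_ofReal]
    rfl
  rw [Function.comp_apply, hcast, ← Complex.ofReal_div, Complex.ofReal_re]

theorem integral_div_sqrt_mul_two_sub (f : ℝ → ℝ) :
    ∫ α in (0 : ℝ)..1, f α / √(α * (2 - α)) = ∫ θ in 0..π / 2, f (1 - cos θ) := by
  have himage : (fun θ => 1 - cos θ) '' Ioo 0 (π / 2) = Ioo 0 1 := by
    ext α
    constructor
    · rintro ⟨θ, hθ, rfl⟩
      have hcos : cos θ < 1 := by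
        simpa using cos_lt_cos_of_nonneg_of_le_pi_div_two le_rfl hθ.2.le hθ.1
      exact ⟨by linarith, by linarith [cos_pos_of_mem_Ioo ⟨by linarith [hθ.1, pi_pos], hθ.2⟩]⟩
    · rintro ⟨h0, h1⟩
      refine ⟨arccos (1 - α),
        ⟨arccos_pos.2 (by linarith), arccos_lt_pi_div_two.2 (by linarith)⟩, ?_⟩
      simp [cos_arccos (by linarith : (-1 : ℝ) ≤ 1 - α) (by linarith)]
  have hderiv : ∀ θ ∈ Ioo 0 (π / 2),
      HasDerivWithinAt (fun θ => 1 - cos θ) (sin θ) (Ioo 0 (π / 2)) θ := fun θ _ => by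
    simpa using ((hasDerivAt_cos θ).const_sub 1).hasDerivWithinAt
  have hinj : InjOn (fun θ => 1 - cos θ) (Ioo 0 (π / 2)) := fun a ha b hb hab =>
    injOn_cos ⟨ha.1.le, by linarith [ha.2, pi_pos]⟩ ⟨hb.1.le, by linarith [hb.2, pi_pos]⟩
      (by simpa using hab)
  have hcov := MeasureTheory.integral_image_eq_integral_abs_deriv_smul measurableSet_Ioo hderiv
    hinj fun α => f α / √(α * (2 - α))
  rw [himage] at hcov
  rw [integral_of_le zero_le_one, MeasureTheory.integral_Ioc_eq_integral_Ioo, hcov,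
    integral_of_le pi_div_two_pos.le, MeasureTheory.integral_Ioc_eq_integral_Ioo]
  refine MeasureTheory.setIntegral_congr_fun measurableSet_Ioo fun θ hθ => ?_
  have hsin : 0 < sin θ := sin_pos_of_pos_of_lt_pi hθ.1 (by linarith [hθ.2, pi_pos])
  have hsq : (1 - cos θ) * (2 - (1 - cos θ)) = sin θ ^ 2 := by
    rw [sin_sq]; ring
  rw [smul_eq_mul, hsq, sqrt_sq hsin.le, abs_of_pos hsin]
  field_simp

lemma one_add_div_pos {β t : ℝ} (hβ : 0 < β ∨ β < -1) (h0 : 0 ≤ t) (h1 : t ≤ 1) :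
    0 < 1 + t / β := by
  rcases hβ with hβ | hβ
  · positivity
  · rw [one_add_div (by linarith)]
    exact div_pos_of_neg_of_neg (by linarith) (by linarith)

lemma continuousOn_inv_one_add_one_sub_cos_div {β : ℝ} (hβ : 0 < β ∨ β < -1) :
    ContinuousOn (fun θ => (1 + (1 - cos θ) / β)⁻¹) (Icc 0 (π / 2)) :=
  (by fun_prop : Continuous fun θ => 1 + (1 - cos θ) / β).continuousOn.inv₀ fun θ hθ =>
    (one_add_div_pos hβ (by linarith [cos_le_one θ])
      (by linarith [cos_nonneg_of_mem_Icc ⟨by linarith [hθ.1, pi_pos], hθ.2⟩])).ne'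

theorem stmt_15 (β : ℝ) (hβ : 0 < β ∨ β < -1) :
    Filter.Tendsto
      (fun k : ℕ =>
        (∫ α in (0:ℝ)..1,
            (1 - α) ^ (4 * k + 2) / ((1 + α / β) * Real.sqrt (α * (2 - α)))) /
          Real.sqrt (Real.pi / (8 * k)))
      Filter.atTop (nhds 1) := by
  set g : ℝ → ℝ := fun θ => (1 + (1 - cos θ) / β)⁻¹
  have hsub (n : ℕ) : ∫ α in (0 : ℝ)..1, (1 - α) ^ n / ((1 + α / β) * √(α * (2 - α))) =
      ∫ θ in 0..π / 2, cos θ ^ n * g θ := by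
    simp_rw [← div_div, integral_div_sqrt_mul_two_sub, sub_sub_cancel]
    exact integral_congr fun θ _ => div_eq_mul_inv _ _
  have hpeak : (fun n : ℕ => ∫ θ in 0..π / 2, cos θ ^ n * g θ) ~[atTop]
      fun n => ∫ θ in 0..π / 2, cos θ ^ n :=
    isEquivalent_of_tendsto_one <| by
      simpa [g, Pi.div_def] using
        tendsto_integral_cos_pow_mul_div_real (continuousOn_inv_one_add_one_sub_cos_div hβ)
  have h4k : Tendsto (fun k : ℕ => 4 * k) atTop atTop :=
    tendsto_id.const_mul_atTop' (by norm_num)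
  have h4k2 : Tendsto (fun k : ℕ => 4 * k + 2) atTop atTop :=
    (tendsto_add_atTop_nat 2).comp h4k
  have hequiv := (hpeak.comp_tendsto h4k2).trans
    ((integral_cos_pow_add_two_isEquivalent.comp_tendsto h4k).trans
      (integral_cos_pow_isEquivalent.comp_tendsto h4k))
  refine ((isEquivalent_iff_tendsto_one ?_).mp hequiv).congr fun k => ?_
  · filter_upwards [eventually_gt_atTop 0] with k hk
    simp only [Function.comp_apply]
    positivity
  · simp only [Pi.div_apply, Function.comp_apply, hsub]
    push_cast
    ring_nf
end

section
/- Define $I_\beta(k) = \int_0^1 \frac{(1-\alpha)^{4k+2}}{(1+\alpha/\beta)\sqrt{\alpha(2-\alpha)}}\,d\alpha$ for $\beta > 0$ or $\beta < -1$. Then $I_\beta(k+1) - I_\beta(k) = \int_0^1 \frac{(1-\alpha)^{4k+2}}{(1+\alpha/\beta)\sqrt{\alpha(2-\alpha)}}\big[(1-\alpha)^4 - 1\big]\,d\alpha$, and this difference is asymptotic to $-\frac{\sqrt{\pi}}{4\sqrt{2}\,k^{3/2}}$ as $k \to \infty$. -/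
/-!
Since `(1 - α) ^ 4 - 1 = -α (4 - 6α + 4α² - α³)`, the difference is
`-∫₀¹ α^{1/2} (1 - α)^{4k+2} ψ(α) dα` with `ψ` continuous on `[0, 1]`. This is Laplace's method:
substituting `α = u / k` gives `k^{-3/2} ∫₀ᵏ u^{1/2} (1 - u/k)^{4k+2} ψ(u/k) du`, and the last
integral tends to `ψ(0) ∫₀^∞ u^{1/2} e^{-4u} du = ψ(0) Γ(3/2) / 4^{3/2}` by dominated convergence,
with `(1 - u/k)^{4k+2} ≤ e^{-4u}`. Finally `ψ(0) = 2√2` and `Γ(3/2) = √π / 2`.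
-/

open Real Set Filter MeasureTheory Topology

lemma one_sub_div_pow_mul_add_le_exp_neg {u : ℝ} {k : ℕ} (hu : 0 ≤ u) (huk : u ≤ k)
    (a b : ℕ) : (1 - u / k) ^ (a * k + b) ≤ exp (-(a * u)) := by
  have h0 : 0 ≤ 1 - u / k := sub_nonneg.2 (div_le_one_of_le₀ huk k.cast_nonneg)
  have h1 : 1 - u / k ≤ 1 := sub_le_self _ (by positivity)
  calc (1 - u / k) ^ (a * k + b) ≤ (1 - u / k) ^ (k * a) :=
        pow_le_pow_of_le_one h0 h1 (by rw [mul_comm]; exact Nat.le_add_right _ _)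
    _ = ((1 - u / k) ^ k) ^ a := pow_mul _ _ _
    _ ≤ exp (-u) ^ a := by gcongr; exact one_sub_div_pow_le_exp_neg huk
    _ = exp (-(a * u)) := by rw [← exp_nat_mul]; ring_nf

lemma tendsto_one_sub_div_pow_mul_add (u : ℝ) (a b : ℕ) :
    Tendsto (fun k : ℕ => (1 - u / k) ^ (a * k + b)) atTop (𝓝 (exp (-(a * u)))) := by
  have hbase : Tendsto (fun k : ℕ => 1 - u / k) atTop (𝓝 1) := by
    simpa using tendsto_const_nhds.sub (tendsto_const_div_atTop_nhds_zero_nat u)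
  have h := ((tendsto_one_add_div_pow_exp (-u)).pow a).mul (hbase.pow b)
  rw [← exp_nat_mul, one_pow, mul_one, mul_neg] at h
  refine h.congr fun k => ?_
  rw [pow_add, mul_comm a, pow_mul, neg_div, ← sub_eq_add_neg]

lemma rpow_add_one_mul_integral_rpow_mul (g : ℝ → ℝ) (s : ℝ) {c : ℝ} (hc : 0 < c) :
    c ^ (s + 1) * ∫ α in (0 : ℝ)..1, α ^ s * g α = ∫ u in (0 : ℝ)..c, u ^ s * g (u / c) := by
  have hscale : ∀ u ∈ uIcc 0 c, u ^ s * g (u / c) = c ^ s * ((u / c) ^ s * g (u / c)) := by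
    intro u hu
    rw [uIcc_of_le hc.le] at hu
    rw [div_rpow hu.1 hc.le, ← mul_assoc, mul_div_cancel₀ _ (rpow_pos_of_pos hc s).ne']
  rw [intervalIntegral.integral_congr hscale, intervalIntegral.integral_const_mul,
    intervalIntegral.integral_comp_div (fun α => α ^ s * g α) hc.ne', zero_div, div_self hc.ne',
    smul_eq_mul, rpow_add_one hc.ne', mul_assoc]

lemma div_mem_Icc_of_mem_Ioc {u c : ℝ} (hu : u ∈ Ioc 0 c) : u / c ∈ Icc (0 : ℝ) 1 :=
  ⟨div_nonneg hu.1.le (hu.1.le.trans hu.2), div_le_one_of_le₀ hu.2 (hu.1.le.trans hu.2)⟩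

section Laplace

variable {ψ : ℝ → ℝ} {s : ℝ} {a : ℕ}

lemma integrableOn_rpow_mul_exp_neg_mul_Ioi (hs : -1 < s) (ha : 0 < a) :
    IntegrableOn (fun u : ℝ => u ^ s * exp (-(a * u))) (Ioi 0) := by
  simpa [rpow_one] using
    integrableOn_rpow_mul_exp_neg_mul_rpow hs one_pos (b := a) (by exact_mod_cast ha)

lemma norm_rpow_mul_one_sub_div_pow_mul_le {M : ℝ} (hM : ∀ x ∈ Icc (0 : ℝ) 1, ‖ψ x‖ ≤ M)
    {u : ℝ} {k : ℕ} (hu : u ∈ Ioc 0 (k : ℝ)) (b : ℕ) :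
    ‖u ^ s * ((1 - u / k) ^ (a * k + b) * ψ (u / k))‖ ≤ u ^ s * (exp (-(a * u)) * M) := by
  have hdiv := div_mem_Icc_of_mem_Ioc hu
  rw [norm_mul, norm_mul, norm_of_nonneg (rpow_nonneg hu.1.le s),
    norm_of_nonneg (pow_nonneg (sub_nonneg.2 hdiv.2) _)]
  gcongr
  · exact rpow_nonneg hu.1.le s
  · exact one_sub_div_pow_mul_add_le_exp_neg hu.1.le hu.2 a b
  · exact hM _ hdiv

lemma tendsto_integral_rpow_mul_one_sub_div_pow (hψ : ContinuousOn ψ (Icc 0 1))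
    (hs : -1 < s) (ha : 0 < a) (b : ℕ) :
    Tendsto (fun k : ℕ => ∫ u in (0 : ℝ)..k, u ^ s * ((1 - u / k) ^ (a * k + b) * ψ (u / k)))
      atTop (𝓝 (∫ u in Ioi 0, u ^ s * (exp (-(a * u)) * ψ 0))) := by
  obtain ⟨M, hM⟩ := isCompact_Icc.exists_bound_of_continuousOn hψ
  have hM0 : 0 ≤ M := (norm_nonneg _).trans (hM 0 (left_mem_Icc.2 zero_le_one))
  set F : ℕ → ℝ → ℝ := fun k =>
    (Ioc 0 (k : ℝ)).indicator fun u => u ^ s * ((1 - u / k) ^ (a * k + b) * ψ (u / k))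
  have hF (k : ℕ) : ∫ u in (0 : ℝ)..k, u ^ s * ((1 - u / k) ^ (a * k + b) * ψ (u / k)) =
      ∫ u in Ioi 0, F k u := by
    rw [setIntegral_indicator measurableSet_Ioc, inter_eq_right.2 Ioc_subset_Ioi_self,
      intervalIntegral.integral_of_le (Nat.cast_nonneg k)]
  simp_rw [hF]
  refine tendsto_integral_of_dominated_convergence (fun u => u ^ s * (exp (-(a * u)) * M))
    (fun k => ?_) (by simpa only [mul_assoc] using
      (integrableOn_rpow_mul_exp_neg_mul_Ioi hs ha).mul_const M) (fun k => ?_) ?_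
  · refine (aestronglyMeasurable_indicator_iff measurableSet_Ioc).2
      (ContinuousOn.aestronglyMeasurable ?_ measurableSet_Ioc)
    refine (continuousOn_id.rpow_const fun u hu => Or.inl hu.1.ne').mul
      (ContinuousOn.mul (by fun_prop) ?_)
    exact hψ.comp (by fun_prop) fun u hu => div_mem_Icc_of_mem_Ioc hu
  · filter_upwards [ae_restrict_mem measurableSet_Ioi] with u (hu : 0 < u)
    by_cases huk : u ∈ Ioc 0 (k : ℝ)
    · simpa only [F, indicator_of_mem huk] using norm_rpow_mul_one_sub_div_pow_mul_le hM huk b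
    · simp only [F, indicator_of_notMem huk, norm_zero]
      positivity
  · filter_upwards [ae_restrict_mem measurableSet_Ioi] with u (hu : 0 < u)
    have hmem : ∀ᶠ k : ℕ in atTop, u ∈ Ioc 0 (k : ℝ) := by
      filter_upwards [eventually_ge_atTop ⌈u⌉₊] with k hk using ⟨hu, Nat.ceil_le.1 hk⟩
    have hψ0 : Tendsto (fun k : ℕ => ψ (u / k)) atTop (𝓝 (ψ 0)) :=
      (hψ 0 (left_mem_Icc.2 zero_le_one)).tendsto.comp <| tendsto_nhdsWithin_iff.2
        ⟨tendsto_const_div_atTop_nhds_zero_nat u, hmem.mono fun k => div_mem_Icc_of_mem_Ioc⟩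
    refine (tendsto_const_nhds.mul ((tendsto_one_sub_div_pow_mul_add u a b).mul hψ0)).congr' ?_
    filter_upwards [hmem] with k hk
    simp only [F, indicator_of_mem hk]

theorem tendsto_rpow_mul_integral_rpow_mul_one_sub_pow (hψ : ContinuousOn ψ (Icc 0 1))
    (hs : -1 < s) (ha : 0 < a) (b : ℕ) :
    Tendsto (fun k : ℕ =>
        (k : ℝ) ^ (s + 1) * ∫ α in (0 : ℝ)..1, α ^ s * ((1 - α) ^ (a * k + b) * ψ α))
      atTop (𝓝 ((1 / a) ^ (s + 1) * Gamma (s + 1) * ψ 0)) := by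
  rw [← integral_rpow_mul_exp_neg_mul_Ioi (by linarith) (by exact_mod_cast ha),
    add_sub_cancel_right, ← integral_mul_const]
  simp_rw [mul_assoc]
  refine (tendsto_integral_rpow_mul_one_sub_div_pow hψ hs ha b).congr' ?_
  filter_upwards [eventually_gt_atTop 0] with k hk
  exact (rpow_add_one_mul_integral_rpow_mul (fun α => (1 - α) ^ (a * k + b) * ψ α) s
    (Nat.cast_pos.2 hk)).symm

end Laplace

/-- The integrand of `I_β(k)` is `α^{-1/2} (1 - α)^{4k+2} weight β α`. -/
noncomputable def weight (β α : ℝ) : ℝ := ((1 + α / β) * √(2 - α))⁻¹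

/-- The factor `ψ` of the header, from `(1 - α)^4 - 1 = -α (4 - 6α + 4α² - α³)`. -/
noncomputable def incrementWeight (β α : ℝ) : ℝ :=
  (4 - 6 * α + 4 * α ^ 2 - α ^ 3) * weight β α

lemma one_add_div_pos_s16 {β α : ℝ} (hβ : 0 < β ∨ β < -1) (hα : α ∈ Icc (0 : ℝ) 1) :
    0 < 1 + α / β := by
  rcases hβ with hβ | hβ
  · exact add_pos_of_pos_of_nonneg one_pos (div_nonneg hα.1 hβ.le)
  · have hβ0 : β ≠ 0 := (by linarith : β < 0).ne
    rw [show 1 + α / β = (β + α) / β by field_simp]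
    exact div_pos_of_neg_of_neg (by linarith [hα.2]) (by linarith)

lemma continuousOn_weight {β : ℝ} (hβ : 0 < β ∨ β < -1) :
    ContinuousOn (weight β) (Icc 0 1) := by
  refine ContinuousOn.inv₀ (by fun_prop) fun α hα => ?_
  exact mul_ne_zero (one_add_div_pos_s16 hβ hα).ne' (sqrt_pos.2 (by linarith [hα.2])).ne'

lemma continuousOn_incrementWeight {β : ℝ} (hβ : 0 < β ∨ β < -1) :
    ContinuousOn (incrementWeight β) (Icc 0 1) :=
  (by fun_prop : Continuous fun α : ℝ => 4 - 6 * α + 4 * α ^ 2 - α ^ 3).continuousOn.mul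
    (continuousOn_weight hβ)

lemma div_mul_sqrt_eq_rpow_mul_weight (β : ℝ) (n : ℕ) {α : ℝ} (hα : 0 ≤ α) :
    (1 - α) ^ n / ((1 + α / β) * √(α * (2 - α))) =
      α ^ (-1 / 2 : ℝ) * ((1 - α) ^ n * weight β α) := by
  rw [sqrt_mul hα, sqrt_eq_rpow, neg_div, rpow_neg hα, weight]
  simp only [div_eq_mul_inv, mul_inv]
  ring

lemma intervalIntegrable_div_mul_sqrt {β : ℝ} (hβ : 0 < β ∨ β < -1) (n : ℕ) :
    IntervalIntegrable (fun α => (1 - α) ^ n / ((1 + α / β) * √(α * (2 - α)))) volume 0 1 := by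
  have hrpow := intervalIntegral.intervalIntegrable_rpow' (a := 0) (b := 1)
    (by norm_num : (-1 : ℝ) < -1 / 2)
  refine (hrpow.mul_continuousOn (g := fun α => (1 - α) ^ n * weight β α) ?_).congr
    fun α hα => ?_
  · rw [uIcc_of_le zero_le_one]
    exact (by fun_prop : Continuous fun α : ℝ => (1 - α) ^ n).continuousOn.mul
      (continuousOn_weight hβ)
  · rw [uIoc_of_le zero_le_one] at hα
    exact (div_mul_sqrt_eq_rpow_mul_weight β n hα.1.le).symm

lemma integral_pow_add_four_sub_integral_pow {β : ℝ} (hβ : 0 < β ∨ β < -1) (n : ℕ) :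
    (∫ α in (0 : ℝ)..1, (1 - α) ^ (n + 4) / ((1 + α / β) * √(α * (2 - α)))) -
        ∫ α in (0 : ℝ)..1, (1 - α) ^ n / ((1 + α / β) * √(α * (2 - α))) =
      ∫ α in (0 : ℝ)..1, (1 - α) ^ n / ((1 + α / β) * √(α * (2 - α))) * ((1 - α) ^ 4 - 1) := by
  rw [← intervalIntegral.integral_sub (intervalIntegrable_div_mul_sqrt hβ _)
    (intervalIntegrable_div_mul_sqrt hβ _)]
  refine intervalIntegral.integral_congr fun α _ => ?_
  simp only [pow_add]
  ring

lemma integral_div_mul_sqrt_mul_one_sub_pow_four_sub_one (β : ℝ) (n : ℕ) :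
    ∫ α in (0 : ℝ)..1, (1 - α) ^ n / ((1 + α / β) * √(α * (2 - α))) * ((1 - α) ^ 4 - 1) =
      -∫ α in (0 : ℝ)..1, α ^ (1 / 2 : ℝ) * ((1 - α) ^ n * incrementWeight β α) := by
  rw [← intervalIntegral.integral_neg]
  refine intervalIntegral.integral_congr fun α hα => ?_
  rw [uIcc_of_le zero_le_one] at hα
  have hsqrt : α ^ (1 / 2 : ℝ) = α ^ (-1 / 2 : ℝ) * α := by
    rw [← rpow_add_one' hα.1 (by norm_num)]; norm_num
  rw [div_mul_sqrt_eq_rpow_mul_weight β n hα.1, hsqrt, incrementWeight]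
  ring

lemma laplace_constant_incrementWeight (β : ℝ) :
    (1 / 4 : ℝ) ^ ((1 / 2 : ℝ) + 1) * Gamma (1 / 2 + 1) * incrementWeight β 0 =
      √π / (4 * √2) := by
  have h4 : (1 / 4 : ℝ) ^ (1 / 2 : ℝ) = 1 / 2 := by
    rw [← sqrt_eq_rpow, show (1 / 4 : ℝ) = (1 / 2) ^ 2 by norm_num, sqrt_sq (by norm_num)]
  rw [Gamma_add_one (by norm_num), Gamma_one_half_eq, rpow_add_one (by norm_num), h4,
    incrementWeight, weight]
  simp only [one_div, mul_zero, sub_zero, ne_eq, OfNat.ofNat_ne_zero, not_false_eq_true,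
    zero_pow, add_zero, zero_div, one_mul]
  field_simp
  ring

theorem stmt_16 (β : ℝ) (hβ : 0 < β ∨ β < -1) :
    (∀ k : ℕ,
      (∫ α in (0:ℝ)..1,
          (1 - α) ^ (4 * (k + 1) + 2) / ((1 + α / β) * Real.sqrt (α * (2 - α)))) -
        (∫ α in (0:ℝ)..1,
          (1 - α) ^ (4 * k + 2) / ((1 + α / β) * Real.sqrt (α * (2 - α)))) =
      ∫ α in (0:ℝ)..1,
        (1 - α) ^ (4 * k + 2) / ((1 + α / β) * Real.sqrt (α * (2 - α))) *
          ((1 - α) ^ 4 - 1)) ∧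
    Filter.Tendsto
      (fun k : ℕ =>
        ((∫ α in (0:ℝ)..1,
            (1 - α) ^ (4 * (k + 1) + 2) / ((1 + α / β) * Real.sqrt (α * (2 - α)))) -
          (∫ α in (0:ℝ)..1,
            (1 - α) ^ (4 * k + 2) / ((1 + α / β) * Real.sqrt (α * (2 - α))))) /
          (-(Real.sqrt Real.pi / (4 * Real.sqrt 2 * (k : ℝ) ^ ((3 : ℝ) / 2)))))
      Filter.atTop (nhds 1) := by
  have hdiff (k : ℕ) := integral_pow_add_four_sub_integral_pow hβ (4 * k + 2)
  simp only [show ∀ k : ℕ, 4 * k + 2 + 4 = 4 * (k + 1) + 2 from fun k => by ring] at hdiff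
  refine ⟨hdiff, ?_⟩
  have hlim := tendsto_rpow_mul_integral_rpow_mul_one_sub_pow (continuousOn_incrementWeight hβ)
    (by norm_num : (-1 : ℝ) < 1 / 2) (by norm_num : 0 < 4) 2
  rw [Nat.cast_ofNat, laplace_constant_incrementWeight] at hlim
  have hC : √π / (4 * √2) ≠ 0 := by positivity
  refine (div_self hC ▸ hlim.div_const (√π / (4 * √2))).congr' ?_
  filter_upwards [eventually_gt_atTop 0] with k hk
  rw [hdiff, integral_div_mul_sqrt_mul_one_sub_pow_four_sub_one,
    show (3 : ℝ) / 2 = 1 / 2 + 1 by norm_num]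
  have hk' : (k : ℝ) ^ ((1 : ℝ) / 2 + 1) ≠ 0 := by positivity
  field_simp
end

section
/- Let $Q(x)$ be the $2n \times 2n$ matrix over $\mathbb{Q}[x]$ with entries $Q_{i,j}(x) = \sum_{l=0}^{i-1}\frac{j-i}{i}\binom{j-1}{i-l-1}\binom{l+j}{l}\binom{2x+2n+1}{l+j+1}$ (generalized binomial coefficient in $x$), $1 \le i,j \le 2n$. Then for every integer $s$ with $1 \le s \le n$ and all integers $a, b$ with $1 \le a \le b \le 2n$ satisfying $a - b \le 2n-2s < a$: $\sum_{i=a}^{b} \binom{b-a}{i-a}\, Q_{i,j}(-s) = 0$ for every $j$ with $1 \le j \le 2n$. -/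
/-!
At `x = -s` the top argument `2x + 2n + 1` is the natural number `M = 2(n - s) + 1`, so every
generalized binomial coefficient in `Q_{i,j}(-s)` is an ordinary one. A term of `Q_{i,j}(-s)`
can only be nonzero if `i - l - 1 ≤ j - 1` and `l + j + 1 ≤ M`, i.e. `i ≤ l + j < M`; hence
`Q_{i,j}(-s) = 0` as soon as `M ≤ i`, which the hypothesis `2n - 2s < a` guarantees for every
index `i ≥ a` of the sum.
-/

/-- Generalized binomial coefficient `y` choose `r` as a rational number,
for rational `y` and natural `r`. -/
noncomputable def gbinom (y : ℚ) (r : ℕ) : ℚ :=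
  (∏ t ∈ Finset.range r, (y - t)) / r.factorial

/-- The entry `Q_{i,j}(x)` of the matrix `Q(x)`. -/
noncomputable def Qent (n i j : ℕ) (x : ℚ) : ℚ :=
  ∑ l ∈ Finset.range i,
    ((j : ℚ) - i) / i * Nat.choose (j - 1) (i - l - 1) *
      Nat.choose (l + j) l * gbinom (2 * x + 2 * n + 1) (l + j + 1)

lemma gbinom_natCast (N r : ℕ) : gbinom N r = N.choose r := by
  rw [gbinom, Nat.cast_choose_eq_descPochhammer_div, descPochhammer_eval_eq_prod_range]

lemma choose_pred_mul_choose_eq_zero {i j l M : ℕ} (hj : 1 ≤ j) (hM : M ≤ i) :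
    (j - 1).choose (i - l - 1) * M.choose (l + j + 1) = 0 := by
  rcases le_or_gt (i - l - 1) (j - 1) with h | h
  · rw [Nat.choose_eq_zero_of_lt (by omega : M < l + j + 1), mul_zero]
  · rw [Nat.choose_eq_zero_of_lt h, zero_mul]

lemma Qent_eq_zero_of_le {n i j M : ℕ} {x : ℚ} (hj : 1 ≤ j)
    (hx : 2 * x + 2 * n + 1 = M) (hM : M ≤ i) : Qent n i j x = 0 := by
  refine Finset.sum_eq_zero fun l _ => ?_
  have h := choose_pred_mul_choose_eq_zero (l := l) hj hM
  rw [hx, gbinom_natCast]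
  calc ((j : ℚ) - i) / i * (j - 1).choose (i - l - 1) * (l + j).choose l * M.choose (l + j + 1)
      = ((j : ℚ) - i) / i * (l + j).choose l *
          ((j - 1).choose (i - l - 1) * M.choose (l + j + 1) : ℕ) := by
        push_cast; ring
    _ = 0 := by rw [h, Nat.cast_zero, mul_zero]

theorem stmt_19_general (n s a b : ℕ) (hsn : s ≤ n)
    (h2 : (2 * n - 2 * s : ℤ) < a) :
    ∀ j : ℕ, 1 ≤ j → j ≤ 2 * n →
      ∑ i ∈ Finset.Icc a b,
          (Nat.choose (b - a) (i - a) : ℚ) * Qent n i j (-(s : ℚ)) = 0 := by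
  intro j hj _
  have hx : 2 * (-(s : ℚ)) + 2 * n + 1 = ((2 * (n - s) + 1 : ℕ) : ℚ) := by
    push_cast [Nat.cast_sub hsn]
    ring
  refine Finset.sum_eq_zero fun i hi => ?_
  have hMi : 2 * (n - s) + 1 ≤ i := by
    rw [Finset.mem_Icc] at hi
    omega
  rw [Qent_eq_zero_of_le hj hx hMi, mul_zero]

theorem stmt_19 (n s a b : ℕ) (hs : 1 ≤ s) (hsn : s ≤ n)
    (ha : 1 ≤ a) (hab : a ≤ b) (hb : b ≤ 2 * n)
    (h1 : (a : ℤ) - b ≤ 2 * n - 2 * s) (h2 : (2 * n - 2 * s : ℤ) < a) :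
    ∀ j : ℕ, 1 ≤ j → j ≤ 2 * n →
      ∑ i ∈ Finset.Icc a b,
          (Nat.choose (b - a) (i - a) : ℚ) * Qent n i j (-(s : ℚ)) = 0 :=
  stmt_19_general n s a b hsn h2
end
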